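/- arXiv:2504.06756 — 2 statements merged into one kernel-verified Lean document; each statement's English description precedes it below -/
import Mathlib

section
/- Let S be a dense subsemigroup of ((0,∞),+) and v ≥ 1. Then 0⁺(Sᵛ) ∩ K(β(Sᵛ_d)) = ∅. -/
/-!
Pick any `c ∈ S`. Because `S` consists of positive reals, the set `{f | ∀ i, c ≤ f i}` absorbs
addition by arbitrary elements of `Sᵛ` on either side, so the ultrafilters containing it form a
two-sided ideal of `β(Sᵛ_d)` and every member of `K(β(Sᵛ_d))` contains it. A member of `0⁺(Sᵛ)`
contains `((0,c) ∩ S)ᵛ`, which is disjoint from that set as soon as `v ≥ 1`.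
-/

open Filter Set

attribute [local instance] Ultrafilter.add Ultrafilter.addSemigroup

/-- `0⁺(Sᵛ)`: ultrafilters on `Sᵛ` (discrete) containing `((0,ε) ∩ S)ᵛ` for every `ε > 0`. -/
def zeroPlusV (S : AddSubsemigroup ℝ) (v : ℕ) : Set (Ultrafilter (Fin v → S)) :=
  {p | ∀ ε : ℝ, 0 < ε → {f : Fin v → S | ∀ i, 0 < (f i : ℝ) ∧ (f i : ℝ) < ε} ∈ p}

/-- A (nonempty) two-sided ideal of the semigroup `βγ` of ultrafilters. -/
def IsTwoSidedIdealU (γ : Type*) [AddSemigroup γ] (I : Set (Ultrafilter γ)) : Prop :=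
  I.Nonempty ∧ ∀ p ∈ I, ∀ q : Ultrafilter γ, p + q ∈ I ∧ q + p ∈ I

/-- `K(βγ)`, the smallest two-sided ideal of `βγ` (the intersection of all two-sided ideals,
which coincides with the smallest ideal since `βγ` has one). -/
def smallestIdealU (γ : Type*) [AddSemigroup γ] : Set (Ultrafilter γ) :=
  ⋂₀ {I | IsTwoSidedIdealU γ I}

section IdealOfSet

variable {γ : Type*} [AddSemigroup γ]

def IsTwoSidedAddIdeal (A : Set γ) : Prop :=
  ∀ x ∈ A, ∀ y, x + y ∈ A ∧ y + x ∈ A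

variable {A : Set γ}

theorem isTwoSidedIdealU_setOf_mem (hA : IsTwoSidedAddIdeal A) (hne : A.Nonempty) :
    IsTwoSidedIdealU γ {q | A ∈ q} := by
  obtain ⟨a, ha⟩ := hne
  refine ⟨⟨pure a, ha⟩, fun q hq r => ⟨?_, ?_⟩⟩
  · change ∀ᶠ z in (↑(q + r) : Filter γ), z ∈ A
    rw [Ultrafilter.eventually_add]
    filter_upwards [(hq : ∀ᶠ x in (q : Filter γ), x ∈ A)] with x hx
    exact Eventually.of_forall fun y => (hA x hx y).1
  · change ∀ᶠ z in (↑(r + q) : Filter γ), z ∈ A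
    rw [Ultrafilter.eventually_add]
    refine Eventually.of_forall fun y => ?_
    filter_upwards [(hq : ∀ᶠ x in (q : Filter γ), x ∈ A)] with x hx
    exact (hA x hx y).2

theorem mem_of_mem_smallestIdealU (hA : IsTwoSidedAddIdeal A) (hne : A.Nonempty)
    {p : Ultrafilter γ} (hp : p ∈ smallestIdealU γ) : A ∈ p :=
  hp _ (isTwoSidedIdealU_setOf_mem hA hne)

end IdealOfSet

theorem isTwoSidedAddIdeal_setOf_forall_le {S : AddSubsemigroup ℝ} (hpos : ∀ x ∈ S, (0:ℝ) < x)
    (ι : Type*) (c : ℝ) : IsTwoSidedAddIdeal {f : ι → S | ∀ i, c ≤ f i} := by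
  intro f hf g
  refine ⟨fun i => ?_, fun i => ?_⟩ <;>
  · have := hpos (g i) (g i).2
    have := hf i
    simp only [Pi.add_apply, AddMemClass.coe_add]
    linarith

theorem zeroPlusV_inter_smallestIdeal_eq_empty_general (S : AddSubsemigroup ℝ)
    (hpos : ∀ x ∈ S, (0:ℝ) < x)
    (v : ℕ) (hv : 1 ≤ v) :
    zeroPlusV S v ∩ smallestIdealU (Fin v → S) = ∅ := by
  refine eq_empty_of_forall_notMem fun p ⟨hp0, hK⟩ => ?_
  let i₀ : Fin v := ⟨0, hv⟩
  obtain ⟨f, hf⟩ := Ultrafilter.nonempty_of_mem (hp0 1 one_pos)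
  set c : ℝ := (f i₀ : ℝ)
  have hA : {g : Fin v → S | ∀ i, c ≤ g i} ∈ p :=
    mem_of_mem_smallestIdealU (isTwoSidedAddIdeal_setOf_forall_le hpos _ c)
      ⟨fun _ => f i₀, fun _ => le_rfl⟩ hK
  obtain ⟨g, hgc, hg⟩ := Ultrafilter.nonempty_of_mem (inter_mem hA (hp0 c (hf i₀).1))
  exact (hgc i₀).not_gt (hg i₀).2

/-- `0⁺(Sᵛ) ∩ K(β(Sᵛ_d)) = ∅`. -/
theorem zeroPlusV_inter_smallestIdeal_eq_empty (S : AddSubsemigroup ℝ)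
    (hpos : ∀ x ∈ S, (0:ℝ) < x)
    (hdense : ∀ a b : ℝ, 0 < a → a < b → ∃ s ∈ S, a < s ∧ s < b)
    (v : ℕ) (hv : 1 ≤ v) :
    zeroPlusV S v ∩ smallestIdealU (Fin v → S) = ∅ :=
  zeroPlusV_inter_smallestIdeal_eq_empty_general S hpos v hv
end

section
/- Let p be an idempotent ultrafilter in 0⁺(ℝ⁺) such that every member of p is a J-set near zero, and let u, v ∈ ℕ with M a u × v real matrix. Define D(C) = {x ∈ (ℝ⁺)ᵛ : Mx ∈ Cᵘ} for C ⊆ ℝ⁺. If D(C) is a J-set near zero in (ℝ⁺)ᵛ for every C ∈ p, then D(C) is a C-set near zero in (ℝ⁺)ᵛ for every C ∈ p. -/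
open Filter Set

attribute [local instance] Ultrafilter.add Ultrafilter.addSemigroup

/-- The finite sums `FS((b(n))ₙ) = {∑_{n∈H} b(n) : H ⊆ ℕ finite nonempty}`. -/
def FS {α : Type*} [AddCommMonoid α] (b : ℕ → α) : Set α :=
  {y | ∃ H : Finset ℕ, H.Nonempty ∧ y = ∑ t ∈ H, b t}

/-- `C ⊆ ℝ⁺` is a J-set near zero: for every finite set of positive sequences converging to `0`
and every `δ > 0`, there exist `a ∈ (0,δ)` and a finite nonempty `H ⊆ ℕ` with
`a + ∑_{t∈H} f(t) ∈ C` for every `f` in the family. -/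
def JSetNearZero (C : Set ℝ) : Prop :=
  ∀ F : Finset (ℕ → ℝ),
    (∀ f ∈ F, (∀ n, 0 < f n) ∧ Tendsto f atTop (nhds 0)) →
    ∀ δ : ℝ, 0 < δ →
      ∃ a ∈ Set.Ioo (0:ℝ) δ, ∃ H : Finset ℕ, H.Nonempty ∧
        ∀ f ∈ F, a + ∑ t ∈ H, f t ∈ C

/-- `E ⊆ (ℝ⁺)ᵛ` is a J-set near zero. -/
def JSetNearZeroV (v : ℕ) (E : Set (Fin v → ℝ)) : Prop :=
  ∀ F : Finset (ℕ → Fin v → ℝ),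
    (∀ f ∈ F, (∀ n i, 0 < f n i) ∧ ∀ i, Tendsto (fun n => f n i) atTop (nhds 0)) →
    ∀ δ : ℝ, 0 < δ →
      ∃ a : Fin v → ℝ, (∀ i, a i ∈ Set.Ioo (0:ℝ) δ) ∧ ∃ H : Finset ℕ, H.Nonempty ∧
        ∀ f ∈ F, a + ∑ t ∈ H, f t ∈ E

/-- `C ⊆ ℝ⁺` is a C-set near zero: `C` belongs to some idempotent ultrafilter `p ∈ 0⁺(ℝ⁺)` all
of whose members are J-sets near zero (i.e. `p ∈ J₀(ℝ⁺)`). -/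
def CSetNearZero (C : Set ℝ) : Prop :=
  ∃ p : Ultrafilter ℝ, p + p = p ∧ (∀ ε : ℝ, 0 < ε → Set.Ioo 0 ε ∈ p) ∧ C ∈ p ∧
    ∀ A ∈ p, JSetNearZero A

/-- `E ⊆ (ℝ⁺)ᵛ` is a C-set near zero: there is an idempotent in `cl(E) ∩ J₀((ℝ⁺)ᵛ)`. -/
def CSetNearZeroV (v : ℕ) (E : Set (Fin v → ℝ)) : Prop :=
  ∃ p : Ultrafilter (Fin v → ℝ), p + p = p ∧
    (∀ ε : ℝ, 0 < ε → {x : Fin v → ℝ | ∀ i, 0 < x i ∧ x i < ε} ∈ p) ∧ E ∈ p ∧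
    ∀ A ∈ p, JSetNearZeroV v A

/-- `U ⊆ (ℝ⁺)ᵈ` is a weak IP-set near zero: it contains `FS` of a sequence in `(ℝ⁺)ᵈ`
converging to zero. -/
def WeakIPNearZero (d : ℕ) (U : Set (Fin d → ℝ)) : Prop :=
  ∃ b : ℕ → Fin d → ℝ, (∀ n i, 0 < b n i) ∧
    (∀ i, Tendsto (fun n => b n i) atTop (nhds 0)) ∧ FS b ⊆ U

/-- `M` is image partition regular over `ℝ⁺`: for every finite coloring of `ℝ⁺` there is
`x ∈ (ℝ⁺)ᵛ` with all entries of `Mx` in `ℝ⁺` and monochromatic. -/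
def IPR (u v : ℕ) (M : Matrix (Fin u) (Fin v) ℝ) : Prop :=
  ∀ r : ℕ, 0 < r → ∀ c : ℝ → Fin r,
    ∃ x : Fin v → ℝ, (∀ j, 0 < x j) ∧ (∀ i, 0 < M.mulVec x i) ∧
      ∃ k : Fin r, ∀ i, c (M.mulVec x i) = k

/-- `M` is image partition regular over `ℝ⁺` near zero: for every finite coloring of `ℝ⁺` and
every `δ > 0` there is `x ∈ (ℝ⁺)ᵛ` with the entries of `Mx` monochromatic and in `(0,δ)`. -/
def IPRNearZero (u v : ℕ) (M : Matrix (Fin u) (Fin v) ℝ) : Prop :=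
  ∀ r : ℕ, 0 < r → ∀ c : ℝ → Fin r, ∀ δ : ℝ, 0 < δ →
    ∃ x : Fin v → ℝ, (∀ j, 0 < x j) ∧ (∀ i, M.mulVec x i ∈ Set.Ioo 0 δ) ∧
      ∃ k : Fin r, ∀ i, c (M.mulVec x i) = k

/-- `B` is a first entries matrix: no row is zero, the first nonzero entry of each row is
positive, and first nonzero entries occurring in the same column are equal. -/
def FirstEntriesMatrix {u m : ℕ} (B : Matrix (Fin u) (Fin m) ℝ) : Prop :=
  (∀ i, ∃ j, B i j ≠ 0) ∧
  (∀ i j, (∀ k, k < j → B i k = 0) → B i j ≠ 0 → 0 < B i j) ∧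
  (∀ i i' j, (∀ k, k < j → B i k = 0) → (∀ k, k < j → B i' k = 0) →
    B i j ≠ 0 → B i' j ≠ 0 → B i j = B i' j)

/-!
J-sets near zero are partition regular: colour the words over a finite family `F` of sequences
(each word read as one sequence by summing its letters along disjoint blocks of indices, after
passing to a fast-decaying subsequence) by whether the J-witness they receive lands in `A`; a
monochromatic Hales–Jewett line then yields one J-witness, with the same shift and index set, for
every member of `F`.

Hence the filter generated by the sets `D(C) ∩ (0,ε)ᵛ` (`C ∈ p`, `ε > 0`), all of which are
J-sets, extends to an ultrafilter in `J₀`, so the closed set `T` of such ultrafilters is nonempty.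
Because `p + p = p`, a point `x ∈ D(C ∩ C⋆)`, `C⋆ = {s | -s + C ∈ p}`, satisfies
`x + D(⋂ᵢ (-(Mx)ᵢ + C)) ⊆ D(C)`, which makes `T` a subsemigroup of `βℝᵛ`; Ellis' theorem gives
the idempotent.
-/

open Topology

section UltrafilterLemmas

variable {α : Type*}

theorem Ultrafilter.exists_le_forall_mem_of_partitionRegular {P : Set α → Prop} (hempty : ¬ P ∅)
    (hmono : ∀ ⦃s t⦄, s ⊆ t → P s → P t) (hunion : ∀ ⦃s t⦄, P (s ∪ t) → P s ∨ P t)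
    {f : Filter α} (hf : ∀ s ∈ f, P s) : ∃ q : Ultrafilter α, ↑q ≤ f ∧ ∀ s ∈ q, P s := by
  let g : Filter α := comk (fun s => ¬ P s) hempty (fun t ht s hst hs => ht (hmono hst hs))
    (fun s hs t ht hst => (hunion hst).elim hs ht)
  have : (f ⊓ g).NeBot := by
    refine Filter.inf_neBot_iff.2 fun s hs t ht => ?_
    have hcover : P ((s ∩ t) ∪ tᶜ) :=
      hmono (fun x hx => by by_cases hxt : x ∈ t <;> simp [hx, hxt]) (hf s hs)
    have hst := (hunion hcover).resolve_right ht
    exact nonempty_iff_ne_empty.2 fun he => hempty (he ▸ hst)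
  refine ⟨Ultrafilter.of (f ⊓ g), (Ultrafilter.of_le _).trans inf_le_left, fun s hs => ?_⟩
  by_contra hPs
  have hsc : sᶜ ∈ g := by simpa [g] using hPs
  exact Ultrafilter.compl_notMem_iff.2 hs ((Ultrafilter.of_le _).trans inf_le_right hsc)

theorem Ultrafilter.isClosed_setOf_coe_le (f : Filter α) :
    IsClosed {q : Ultrafilter α | ↑q ≤ f} := by
  simp only [Filter.le_def, ofPred_forall]
  exact isClosed_biInter fun s _ => ultrafilter_isClosed_basic s

theorem Ultrafilter.isClosed_setOf_forall_mem (P : Set α → Prop) :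
    IsClosed {q : Ultrafilter α | ∀ s ∈ q, P s} := by
  have : {q : Ultrafilter α | ∀ s ∈ q, P s} = ⋂ (s) (_ : ¬ P s), {q | sᶜ ∈ q} := by
    ext q
    simp only [mem_ofPred_eq, mem_iInter, Ultrafilter.compl_mem_iff_notMem]
    exact forall_congr' fun _ => not_imp_not.symm
  rw [this]
  exact isClosed_iInter fun s => isClosed_iInter fun _ => ultrafilter_isClosed_basic _

theorem Ultrafilter.coe_add_le {M : Type*} [AddSemigroup M] {f : Filter M}
    (hf : ∀ s ∈ f, ∀ᶠ x in f, ∀ᶠ y in f, x + y ∈ s) {q r : Ultrafilter M}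
    (hq : ↑q ≤ f) (hr : ↑r ≤ f) : ↑(q + r) ≤ f :=
  fun s hs => hq ((hf s hs).mono fun _ hx => hr hx)

end UltrafilterLemmas

theorem sum_le_two_mul_of_le_half_pow {β : Type*} {S : Finset β} {e : β → ℕ} (he : Set.InjOn e S)
    {y : β → ℝ} {c : ℝ} (hc : 0 ≤ c) (hy : ∀ b ∈ S, y b ≤ c * (1 / 2) ^ e b) :
    ∑ b ∈ S, y b ≤ 2 * c :=
  calc ∑ b ∈ S, y b ≤ ∑ b ∈ S, c * (1 / 2) ^ e b := Finset.sum_le_sum hy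
    _ = c * ∑ n ∈ S.image e, (1 / 2 : ℝ) ^ n := by rw [Finset.sum_image he, Finset.mul_sum]
    _ ≤ c * 2 := by
      gcongr
      exact (summable_geometric_two.sum_le_tsum _ fun _ _ => by positivity).trans_eq
        tsum_geometric_two
    _ = 2 * c := mul_comm _ _

theorem Combinatorics.Line.sum_apply_eq {α ι M : Type*} [Fintype ι] [AddCommMonoid M]
    (l : Combinatorics.Line α ι) (x₀ x : α) (g : α → ι → M) :
    ∑ k, g (l x k) k =
      ∑ k with l.idxFun k ≠ none, g (l x₀ k) k + ∑ k with l.idxFun k = none, g x k := by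
  rw [← Finset.sum_filter_not_add_sum_filter _ (fun k => l.idxFun k = none)]
  congr 1
  · refine Finset.sum_congr rfl fun k hk => ?_
    obtain ⟨y, hy⟩ := Option.ne_none_iff_exists'.1 (Finset.mem_filter.1 hk).2
    rw [l.apply_some hy, l.apply_some hy]
  · exact Finset.sum_congr rfl fun k hk => by rw [l.apply_none _ _ (Finset.mem_filter.1 hk).2]

section WordSeq

variable {ι X : Type*} [Fintype ι] [AddCommMonoid X]

def wordSeq (ψ : ι × ℕ → ℕ) (w : ι → ℕ → X) : ℕ → X := fun t => ∑ k, w k (ψ (k, t))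

theorem sum_wordSeq_line {α : Type*} (val : α → ℕ → X) (l : Combinatorics.Line α ι) (x₀ x : α)
    {ψ : ι × ℕ → ℕ} (hψ : Function.Injective ψ) (H : Finset ℕ) :
    ∑ t ∈ H, wordSeq ψ (fun k => val (l x k)) t =
      ∑ k with l.idxFun k ≠ none, ∑ t ∈ H, val (l x₀ k) (ψ (k, t)) +
        ∑ s ∈ (({k | l.idxFun k = none} : Finset ι) ×ˢ H).image ψ, val x s := by
  rw [Finset.sum_image hψ.injOn, Finset.sum_product]
  simp only [wordSeq]
  rw [Finset.sum_comm]
  exact l.sum_apply_eq x₀ x fun y k => ∑ t ∈ H, val y (ψ (k, t))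

end WordSeq

section JSets

variable {v : ℕ}

def IsPosNull (f : ℕ → Fin v → ℝ) : Prop :=
  (∀ n i, 0 < f n i) ∧ ∀ i, Tendsto (fun n => f n i) atTop (𝓝 0)

def JWitness (E : Set (Fin v → ℝ)) (F : Finset (ℕ → Fin v → ℝ)) (δ : ℝ) : Prop :=
  ∃ a : Fin v → ℝ, (∀ i, a i ∈ Ioo (0:ℝ) δ) ∧ ∃ H : Finset ℕ, H.Nonempty ∧
    ∀ f ∈ F, a + ∑ t ∈ H, f t ∈ E

def nearZero (v : ℕ) (ε : ℝ) : Set (Fin v → ℝ) := {x | ∀ i, 0 < x i ∧ x i < ε}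

theorem jSetNearZeroV_iff_forall_jWitness {E : Set (Fin v → ℝ)} :
    JSetNearZeroV v E ↔
      ∀ F : Finset (ℕ → Fin v → ℝ), (∀ f ∈ F, IsPosNull f) → ∀ δ, 0 < δ → JWitness E F δ :=
  Iff.rfl

theorem isPosNull_half_pow : IsPosNull fun n (_ : Fin v) => (1 / 2 : ℝ) ^ n :=
  ⟨fun _ _ => by positivity,
    fun _ => tendsto_pow_atTop_nhds_zero_of_lt_one (by norm_num) (by norm_num)⟩

theorem IsPosNull.comp {f : ℕ → Fin v → ℝ} (hf : IsPosNull f) {φ : ℕ → ℕ}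
    (hφ : Tendsto φ atTop atTop) : IsPosNull (f ∘ φ) :=
  ⟨fun n i => hf.1 (φ n) i, fun i => (hf.2 i).comp hφ⟩

theorem exists_strictMono_lt_half_pow {F : Finset (ℕ → Fin v → ℝ)} (hF : ∀ f ∈ F, IsPosNull f)
    {c : ℝ} (hc : 0 < c) :
    ∃ φ : ℕ → ℕ, StrictMono φ ∧ ∀ n, ∀ f ∈ F, ∀ i, f (φ n) i < c * (1 / 2) ^ n :=
  extraction_forall_of_eventually (P := fun n k => ∀ f ∈ F, ∀ i, f k i < c * (1 / 2) ^ n)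
    fun n => by
      simp only [eventually_all_finset, eventually_all]
      exact fun f hf i => ((hF f hf).2 i).eventually_lt_const (by positivity)

theorem IsPosNull.wordSeq {ι : Type*} [Fintype ι] [Nonempty ι] {ψ : ι × ℕ → ℕ}
    (hψ : ∀ k, Tendsto (fun t => ψ (k, t)) atTop atTop) {w : ι → ℕ → Fin v → ℝ}
    (hw : ∀ k, IsPosNull (w k)) : IsPosNull (wordSeq ψ w) := by
  refine ⟨fun n i => ?_, fun i => ?_⟩
  · simp only [_root_.wordSeq, Finset.sum_apply]
    exact Finset.sum_pos (fun k _ => (hw k).1 _ i) Finset.univ_nonempty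
  · simpa [_root_.wordSeq, Finset.sum_apply] using
      tendsto_finsetSum Finset.univ fun k _ => ((hw k).2 i).comp (hψ k)

theorem add_mem_nearZero {x y : Fin v → ℝ} {ε₁ ε₂ : ℝ} (hx : x ∈ nearZero v ε₁)
    (hy : y ∈ nearZero v ε₂) : x + y ∈ nearZero v (ε₁ + ε₂) :=
  fun i => ⟨add_pos (hx i).1 (hy i).1, add_lt_add (hx i).2 (hy i).2⟩

theorem nearZero_mono {ε ε' : ℝ} (h : ε ≤ ε') : nearZero v ε ⊆ nearZero v ε' :=
  fun _ hx i => ⟨(hx i).1, (hx i).2.trans_le h⟩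

theorem JWitness.mono {E E' : Set (Fin v → ℝ)} {F F' : Finset (ℕ → Fin v → ℝ)} {δ δ' : ℝ}
    (h : JWitness E F' δ) (hE : E ⊆ E') (hF : F ⊆ F') (hδ : δ ≤ δ') : JWitness E' F δ' :=
  let ⟨a, ha, H, hH, hmem⟩ := h
  ⟨a, fun i => ⟨(ha i).1, (ha i).2.trans_le hδ⟩, H, hH, fun f hf => hE (hmem f (hF hf))⟩

theorem jWitness_empty (E : Set (Fin v → ℝ)) {δ : ℝ} (hδ : 0 < δ) : JWitness E ∅ δ :=
  ⟨fun _ => δ / 2, fun _ => ⟨half_pos hδ, half_lt_self hδ⟩, {0}, Finset.singleton_nonempty 0,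
    by simp⟩

end JSets

namespace JSetNearZeroV

variable {v : ℕ} {E E' : Set (Fin v → ℝ)}

theorem mono (h : JSetNearZeroV v E) (hE : E ⊆ E') : JSetNearZeroV v E' :=
  fun F hF δ hδ => (jSetNearZeroV_iff_forall_jWitness.1 h F hF δ hδ).mono hE subset_rfl le_rfl

theorem nonempty (h : JSetNearZeroV v E) : E.Nonempty :=
  let ⟨_, _, _, _, hmem⟩ := jSetNearZeroV_iff_forall_jWitness.1 h {fun n _ => (1 / 2 : ℝ) ^ n}
    (fun _ hf => Finset.mem_singleton.1 hf ▸ isPosNull_half_pow) 1 one_pos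
  ⟨_, hmem _ (Finset.mem_singleton_self _)⟩

theorem inter_nearZero (h : JSetNearZeroV v E) {ε : ℝ} (hε : 0 < ε) :
    JSetNearZeroV v (E ∩ nearZero v ε) := by
  classical
  rw [jSetNearZeroV_iff_forall_jWitness] at h ⊢
  intro F hF δ hδ
  set δ' := min δ ε
  have hδ' : 0 < δ' := lt_min hδ hε
  obtain ⟨φ, hφ, hsmall⟩ := exists_strictMono_lt_half_pow hF (c := δ' / 4) (by positivity)
  obtain ⟨a, ha, H, hH, hmem⟩ := h (F.image (· ∘ φ))
    (by simpa using fun f hf => (hF f hf).comp hφ.tendsto_atTop) (δ' / 2) (half_pos hδ')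
  refine ⟨a, fun i => ⟨(ha i).1, (ha i).2.trans ((half_lt_self hδ').trans_le (min_le_left _ _))⟩,
    H.image φ, hH.image φ, fun f hf => ?_⟩
  rw [Finset.sum_image hφ.injective.injOn]
  refine ⟨hmem _ (Finset.mem_image_of_mem _ hf), fun i => ?_⟩
  have htail : ∑ t ∈ H, f (φ t) i ≤ 2 * (δ' / 4) :=
    sum_le_two_mul_of_le_half_pow (injOn_id _) (by positivity) fun t _ => (hsmall t f hf i).le
  have hpos : 0 ≤ ∑ t ∈ H, f (φ t) i := Finset.sum_nonneg fun t _ => ((hF f hf).1 _ i).le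
  simp only [Pi.add_apply, Finset.sum_apply]
  constructor <;> linarith [(ha i).1, (ha i).2, min_le_right δ ε]

theorem jWitness_or_of_union {A B : Set (Fin v → ℝ)} (h : JSetNearZeroV v (A ∪ B))
    {F : Finset (ℕ → Fin v → ℝ)} (hF : ∀ f ∈ F, IsPosNull f) {δ : ℝ} (hδ : 0 < δ) :
    JWitness A F δ ∨ JWitness B F δ := by
  classical
  rcases F.eq_empty_or_nonempty with rfl | ⟨f₀, hf₀⟩
  · exact .inl (jWitness_empty A hδ)
  obtain ⟨ι, _, hHJ⟩ := Combinatorics.Line.exists_mono_in_high_dimension F Bool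
  have : Nonempty ι := let ⟨l, _⟩ := hHJ fun _ => true; ⟨l.proper.choose⟩
  obtain ⟨e, he⟩ := Countable.exists_injective_nat (ι × ℕ)
  obtain ⟨φ, hφ, hsmall⟩ := exists_strictMono_lt_half_pow hF (c := δ / 8) (by positivity)
  set ψ := φ ∘ e
  have hψ : ∀ k, Tendsto (fun t => ψ (k, t)) atTop atTop := fun k =>
    hφ.tendsto_atTop.comp (he.comp (Prod.mk_right_injective k)).nat_tendsto_atTop
  let g : (ι → F) → ℕ → Fin v → ℝ := fun w => wordSeq ψ fun k => w k
  obtain ⟨a, ha, H, hH, haH⟩ := jSetNearZeroV_iff_forall_jWitness.1 h (Finset.univ.image g)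
    (by simpa using fun w => IsPosNull.wordSeq hψ fun k => hF _ (w k).2) (δ / 2) (half_pos hδ)
  obtain ⟨l, c, hl⟩ := hHJ fun w => decide (a + ∑ t ∈ H, g w t ∈ A)
  set x₀ : F := ⟨f₀, hf₀⟩
  set a' := a + ∑ k with l.idxFun k ≠ none, ∑ t ∈ H, (l x₀ k : ℕ → Fin v → ℝ) (ψ (k, t))
  set H' := (({k | l.idxFun k = none} : Finset ι) ×ˢ H).image ψ
  -- along the line `l`, the fixed coordinates are absorbed into the shift `a'` and the free
  -- coordinates become the index set `H'`, uniformly in the letter `x`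
  have hsplit (x : F) : a + ∑ t ∈ H, g (l x) t = a' + ∑ s ∈ H', (x : ℕ → Fin v → ℝ) s := by
    rw [sum_wordSeq_line Subtype.val l x₀ x (hφ.injective.comp he) H, add_assoc]
  have ha' : ∀ i, a' i ∈ Ioo 0 δ := fun i => by
    have hfixed : ∑ q ∈ ({k | l.idxFun k ≠ none} : Finset ι) ×ˢ H,
        (l x₀ q.1 : ℕ → Fin v → ℝ) (ψ q) i ≤ 2 * (δ / 8) :=
      sum_le_two_mul_of_le_half_pow he.injOn (by positivity) fun q _ =>
        (hsmall (e q) _ (l x₀ q.1).2 i).le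
    have hpos : 0 ≤ ∑ q ∈ ({k | l.idxFun k ≠ none} : Finset ι) ×ˢ H,
        (l x₀ q.1 : ℕ → Fin v → ℝ) (ψ q) i :=
      Finset.sum_nonneg fun q _ => (hF _ (l x₀ q.1).2 |>.1 _ i).le
    rw [Finset.sum_product] at hfixed hpos
    simp only [a', Pi.add_apply, Finset.sum_apply]
    constructor <;> linarith [(ha i).1, (ha i).2]
  have hH' : H'.Nonempty := by
    obtain ⟨k, hk⟩ := l.proper
    obtain ⟨t, ht⟩ := hH
    exact ⟨ψ (k, t), Finset.mem_image_of_mem _ (Finset.mem_product.2 ⟨by simpa using hk, ht⟩)⟩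
  have hAB (x : F) : a + ∑ t ∈ H, g (l x) t ∈ A ∪ B :=
    haH _ (Finset.mem_image_of_mem _ (Finset.mem_univ _))
  cases c
  · refine .inr ⟨a', ha', H', hH', fun f hf => ?_⟩
    have hnA := hl ⟨f, hf⟩
    rw [decide_eq_false_iff_not] at hnA
    have hmem := hAB ⟨f, hf⟩
    rw [hsplit] at hmem hnA
    exact hmem.resolve_left hnA
  · refine .inl ⟨a', ha', H', hH', fun f hf => ?_⟩
    simpa [hsplit] using hl ⟨f, hf⟩

theorem of_union {A B : Set (Fin v → ℝ)} (h : JSetNearZeroV v (A ∪ B)) :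
    JSetNearZeroV v A ∨ JSetNearZeroV v B := by
  classical
  by_contra! hAB
  simp only [jSetNearZeroV_iff_forall_jWitness, not_forall] at hAB
  obtain ⟨⟨F, hF, δ, hδ, hA⟩, ⟨G, hG, η, hη, hB⟩⟩ := hAB
  have hFG : ∀ f ∈ F ∪ G, IsPosNull f := by simpa [or_imp, forall_and] using ⟨hF, hG⟩
  rcases h.jWitness_or_of_union hFG (lt_min hδ hη) with hw | hw
  · exact hA (hw.mono subset_rfl Finset.subset_union_left (min_le_left _ _))
  · exact hB (hw.mono subset_rfl Finset.subset_union_right (min_le_right _ _))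

theorem of_mem_add {q r : Ultrafilter (Fin v → ℝ)} (hq : ∀ A ∈ q, JSetNearZeroV v A)
    (hr : ∀ A ∈ r, JSetNearZeroV v A) {A : Set (Fin v → ℝ)} (hA : A ∈ q + r) :
    JSetNearZeroV v A := by
  classical
  rw [jSetNearZeroV_iff_forall_jWitness]
  intro F hF δ hδ
  obtain ⟨a, ha, H₁, hH₁, hmem₁⟩ :=
    jSetNearZeroV_iff_forall_jWitness.1 (hq _ hA) F hF (δ / 2) (half_pos hδ)
  set m := H₁.max' hH₁ + 1
  have hA' : (⋂ f ∈ F, {y | (a + ∑ t ∈ H₁, f t) + y ∈ A}) ∈ r :=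
    (Filter.biInter_finset_mem F).2 fun f hf => hmem₁ f hf
  obtain ⟨b, hb, H₂, hH₂, hmem₂⟩ :=
    jSetNearZeroV_iff_forall_jWitness.1 (hr _ hA') (F.image (· ∘ (· + m)))
    (by simpa using fun f hf => (hF f hf).comp (tendsto_add_atTop_nat m)) (δ / 2) (half_pos hδ)
  have hdisj : Disjoint H₁ (H₂.image (· + m)) := Finset.disjoint_left.2 fun t ht ht' => by
    obtain ⟨s, -, rfl⟩ := Finset.mem_image.1 ht'
    have := H₁.le_max' _ ht
    omega
  refine ⟨a + b, fun i => ⟨add_pos (ha i).1 (hb i).1, ?_⟩, H₁ ∪ H₂.image (· + m),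
    hH₁.mono Finset.subset_union_left, fun f hf => ?_⟩
  · simpa using add_lt_add (ha i).2 (hb i).2
  rw [Finset.sum_union hdisj, Finset.sum_image (add_left_injective m).injOn, add_add_add_comm]
  exact mem_iInter₂.1 (hmem₂ _ (Finset.mem_image_of_mem _ hf)) f hf

end JSetNearZeroV

section Preimages

variable {m : Type*} {v : ℕ}

/-- The paper's `D(C)`. -/
def posPreimage (M : Matrix m (Fin v) ℝ) (C : Set ℝ) : Set (Fin v → ℝ) :=
  {x | (∀ j, 0 < x j) ∧ ∀ i, M.mulVec x i ∈ C}

theorem posPreimage_mono (M : Matrix m (Fin v) ℝ) {C C' : Set ℝ} (h : C ⊆ C') :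
    posPreimage M C ⊆ posPreimage M C' :=
  fun _ hx => ⟨hx.1, fun i => h (hx.2 i)⟩

def preimageBasis (p : Filter ℝ) (M : Matrix m (Fin v) ℝ) : FilterBasis (Fin v → ℝ) where
  sets := {S | ∃ C ∈ p, ∃ ε > 0, S = posPreimage M C ∩ nearZero v ε}
  nonempty := ⟨_, univ, univ_mem, 1, one_pos, rfl⟩
  inter_sets := by
    rintro _ _ ⟨C₁, hC₁, ε₁, hε₁, rfl⟩ ⟨C₂, hC₂, ε₂, hε₂, rfl⟩
    refine ⟨_, ⟨C₁ ∩ C₂, inter_mem hC₁ hC₂, min ε₁ ε₂, lt_min hε₁ hε₂, rfl⟩, subset_inter ?_ ?_⟩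
    · exact inter_subset_inter (posPreimage_mono M inter_subset_left)
        (nearZero_mono (min_le_left _ _))
    · exact inter_subset_inter (posPreimage_mono M inter_subset_right)
        (nearZero_mono (min_le_right _ _))

variable {M : Matrix m (Fin v) ℝ}

theorem posPreimage_inter_nearZero_mem {p : Filter ℝ} {C : Set ℝ} (hC : C ∈ p) {ε : ℝ}
    (hε : 0 < ε) :
    posPreimage M C ∩ nearZero v ε ∈ (preimageBasis p M).filter :=
  (preimageBasis p M).mem_filter_of_mem ⟨C, hC, ε, hε, rfl⟩

theorem jSetNearZeroV_of_mem_preimageBasis {p : Filter ℝ}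
    (h : ∀ C ∈ p, JSetNearZeroV v (posPreimage M C))
    {S : Set (Fin v → ℝ)} (hS : S ∈ (preimageBasis p M).filter) : JSetNearZeroV v S := by
  obtain ⟨_, ⟨C, hC, ε, hε, rfl⟩, hsub⟩ := (preimageBasis p M).mem_filter_iff.1 hS
  exact ((h C hC).inter_nearZero hε).mono hsub

theorem eventually_add_mem_preimageBasis [Finite m] {p : Ultrafilter ℝ} (hp : p + p = p)
    {S : Set (Fin v → ℝ)} (hS : S ∈ (preimageBasis p M).filter) :
    ∀ᶠ x in (preimageBasis p M).filter, ∀ᶠ y in (preimageBasis p M).filter, x + y ∈ S := by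
  obtain ⟨_, ⟨C, hC, ε, hε, rfl⟩, hsub⟩ := (preimageBasis p M).mem_filter_iff.1 hS
  have hC' : {s | {t | s + t ∈ C} ∈ p} ∈ p := by rw [← hp] at hC; exact hC
  filter_upwards [posPreimage_inter_nearZero_mem (inter_mem hC hC') (half_pos hε)]
    with x ⟨⟨hxpos, hxC⟩, hxε⟩
  have hshift : ⋂ i, {t | M.mulVec x i + t ∈ C} ∈ p := iInter_mem.2 fun i => (hxC i).2
  filter_upwards [posPreimage_inter_nearZero_mem hshift (half_pos hε)]
    with y ⟨⟨hypos, hyC⟩, hyε⟩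
  refine hsub ⟨⟨fun j => add_pos (hxpos j) (hypos j), fun i => ?_⟩, ?_⟩
  · rw [Matrix.mulVec_add]
    exact mem_iInter.1 (hyC i) i
  · simpa using add_mem_nearZero hxε hyε

end Preimages

theorem jSet_to_cSet_preimages_general (p : Ultrafilter ℝ) (hidem : p + p = p)
    (u v : ℕ) (M : Matrix (Fin u) (Fin v) ℝ)
    (h : ∀ C ∈ p, JSetNearZeroV v {x : Fin v → ℝ | (∀ j, 0 < x j) ∧ ∀ i, M.mulVec x i ∈ C}) :
    ∀ C ∈ p, CSetNearZeroV v {x : Fin v → ℝ | (∀ j, 0 < x j) ∧ ∀ i, M.mulVec x i ∈ C} := by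
  intro C hC
  set f := (preimageBasis (p : Filter ℝ) M).filter
  set T : Set (Ultrafilter (Fin v → ℝ)) := {q | ↑q ≤ f ∧ ∀ A ∈ q, JSetNearZeroV v A}
  have hT : T.Nonempty :=
    Ultrafilter.exists_le_forall_mem_of_partitionRegular (fun h₀ => h₀.nonempty.ne_empty rfl)
      (fun _ _ hst hs => hs.mono hst) (fun _ _ => JSetNearZeroV.of_union)
      fun _ => jSetNearZeroV_of_mem_preimageBasis h
  have hTclosed : IsClosed T :=
    (Ultrafilter.isClosed_setOf_coe_le f).inter (Ultrafilter.isClosed_setOf_forall_mem _)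
  have hTadd : ∀ q ∈ T, ∀ r ∈ T, q + r ∈ T := fun q hq r hr =>
    ⟨Ultrafilter.coe_add_le (fun _ => eventually_add_mem_preimageBasis hidem) hq.1 hr.1,
      fun _ => JSetNearZeroV.of_mem_add hq.2 hr.2⟩
  obtain ⟨q, ⟨hqf, hqJ⟩, hqq⟩ := exists_idempotent_in_compact_add_subsemigroup
    Ultrafilter.continuous_add_left T hT hTclosed.isCompact hTadd
  exact ⟨q, hqq, fun ε hε => hqf (mem_of_superset (posPreimage_inter_nearZero_mem univ_mem hε)
    inter_subset_right), hqf (mem_of_superset (posPreimage_inter_nearZero_mem hC one_pos)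
    inter_subset_left), hqJ⟩

/-- Lemma 3.4: if `p` is an idempotent in `J₀(ℝ⁺)` and `D(C)` is a J-set near
zero for every `C ∈ p`, then `D(C)` is a C-set near zero for every `C ∈ p`. -/
theorem jSet_to_cSet_preimages (p : Ultrafilter ℝ) (hidem : p + p = p)
    (hzp : ∀ ε : ℝ, 0 < ε → Set.Ioo 0 ε ∈ p) (hJ : ∀ A ∈ p, JSetNearZero A)
    (u v : ℕ) (M : Matrix (Fin u) (Fin v) ℝ)
    (h : ∀ C ∈ p, JSetNearZeroV v {x : Fin v → ℝ | (∀ j, 0 < x j) ∧ ∀ i, M.mulVec x i ∈ C}) :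
    ∀ C ∈ p, CSetNearZeroV v {x : Fin v → ℝ | (∀ j, 0 < x j) ∧ ∀ i, M.mulVec x i ∈ C} :=
  jSet_to_cSet_preimages_general p hidem u v M h
end
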